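/- arXiv:2511.14517 — 2 statements merged into one kernel-verified Lean document; each statement's English description precedes it below -/
import Mathlib

section
/- With notation as in the SINR invariance, if W is scaled so that ‖W‖_F² = P, then the modified SINR γ̄_k(W) equals the true SINR γ_k(W) = Tr(H_k W E_k W^H) / (Tr(H_k W (I_K − E_k) W^H) + σ_k²). Consequently, maximizing the weighted sum rate Σ_k β_k log₂(1+γ̄_k) without the power constraint and then rescaling W to norm √P yields an optimal solution of the power-constrained weighted sum-rate problem. -/
/-!
The modified SINR is a ratio of two quadratic forms in `W` (the noise term `σ_k² ‖W‖_F² / P`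
included), hence invariant under `W ↦ c • W` for `c ≠ 0`, and on the sphere `‖W‖_F² = P` it is
the true SINR. Rescaling an unconstrained maximiser onto the sphere therefore keeps its value,
and that value dominates the objective at every feasible `W`.
-/

open Matrix

/-- Frobenius norm squared of a complex matrix. -/
noncomputable def frobNormSq {m n : Type*} [Fintype m] [Fintype n]
    (A : Matrix m n ℂ) : ℝ := ∑ i, ∑ j, ‖A i j‖ ^ 2

/-- Frobenius norm of a complex matrix. -/
noncomputable def frobNorm {m n : Type*} [Fintype m] [Fintype n]
    (A : Matrix m n ℂ) : ℝ := Real.sqrt (frobNormSq A)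

/-- The modified SINR of user `k`, where the noise is scaled by ‖W‖_F²/P. -/
noncomputable def modSINR {L K : ℕ} (h : Fin K → Fin L → ℂ) (k : Fin K)
    (σsq : Fin K → ℝ) (P : ℝ) (W : Matrix (Fin L) (Fin K) ℂ) : ℝ :=
  (Matrix.trace (Matrix.vecMulVec (h k) (star (h k)) * W *
      Matrix.single k k (1 : ℂ) * Wᴴ)).re /
    ((Matrix.trace (Matrix.vecMulVec (h k) (star (h k)) * W *
        ((1 : Matrix (Fin K) (Fin K) ℂ) - Matrix.single k k (1 : ℂ)) * Wᴴ)).re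
      + σsq k / P * frobNormSq W)

/-- The true SINR of user `k` with fixed noise power `σ_k²`. -/
noncomputable def trueSINR {L K : ℕ} (h : Fin K → Fin L → ℂ) (k : Fin K)
    (σsq : Fin K → ℝ) (W : Matrix (Fin L) (Fin K) ℂ) : ℝ :=
  (Matrix.trace (Matrix.vecMulVec (h k) (star (h k)) * W *
      Matrix.single k k (1 : ℂ) * Wᴴ)).re /
    ((Matrix.trace (Matrix.vecMulVec (h k) (star (h k)) * W *
        ((1 : Matrix (Fin K) (Fin K) ℂ) - Matrix.single k k (1 : ℂ)) * Wᴴ)).re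
      + σsq k)

section FrobeniusNorm

variable {m n : Type*} [Fintype m] [Fintype n]

lemma frobNormSq_pos {A : Matrix m n ℂ} (hA : A ≠ 0) : 0 < frobNormSq A := by
  obtain ⟨i, j, hij⟩ : ∃ i j, A i j ≠ 0 := by
    by_contra! h
    exact hA (Matrix.ext h)
  calc 0 < ‖A i j‖ ^ 2 := by positivity
    _ ≤ ∑ j', ‖A i j'‖ ^ 2 :=
      Finset.single_le_sum (f := fun j' => ‖A i j'‖ ^ 2) (fun _ _ => by positivity)
        (Finset.mem_univ j)
    _ ≤ frobNormSq A :=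
      Finset.single_le_sum (f := fun i' => ∑ j', ‖A i' j'‖ ^ 2) (fun _ _ => by positivity)
        (Finset.mem_univ i)

lemma frobNormSq_smul (c : ℂ) (A : Matrix m n ℂ) :
    frobNormSq (c • A) = ‖c‖ ^ 2 * frobNormSq A := by
  simp only [frobNormSq, Matrix.smul_apply, smul_eq_mul, norm_mul, mul_pow, Finset.mul_sum]

lemma frobNormSq_smul_sqrt_div_frobNorm {A : Matrix m n ℂ} (hA : A ≠ 0) {P : ℝ} (hP : 0 ≤ P) :
    frobNormSq (((Real.sqrt P / frobNorm A : ℝ) : ℂ) • A) = P := by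
  have hA' := frobNormSq_pos hA
  rw [frobNormSq_smul, Complex.norm_real, Real.norm_eq_abs, sq_abs, div_pow, Real.sq_sqrt hP,
    frobNorm, Real.sq_sqrt hA'.le, div_mul_cancel₀ _ hA'.ne']

end FrobeniusNorm

lemma re_trace_mul_smul_mul_conjTranspose_smul {l n : Type*} [Fintype l] [Fintype n]
    (H : Matrix l l ℂ) (E : Matrix n n ℂ) (W : Matrix l n ℂ) (c : ℂ) :
    (trace (H * (c • W) * E * (c • W)ᴴ)).re = ‖c‖ ^ 2 * (trace (H * W * E * Wᴴ)).re := by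
  simp only [conjTranspose_smul, Matrix.mul_smul, Matrix.smul_mul, smul_smul]
  rw [trace_smul, smul_eq_mul, Complex.star_def, Complex.conj_mul',
    ← Complex.ofReal_pow, Complex.re_ofReal_mul]

section SINR

variable {L K : ℕ} (h : Fin K → Fin L → ℂ) (k : Fin K) (σsq : Fin K → ℝ) {P : ℝ}

lemma modSINR_eq_trueSINR_of_frobNormSq_eq (hP : P ≠ 0) {W : Matrix (Fin L) (Fin K) ℂ}
    (hW : frobNormSq W = P) : modSINR h k σsq P W = trueSINR h k σsq W := by
  rw [modSINR, trueSINR, hW, div_mul_cancel₀ _ hP]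

lemma modSINR_smul (W : Matrix (Fin L) (Fin K) ℂ) {c : ℂ} (hc : c ≠ 0) :
    modSINR h k σsq P (c • W) = modSINR h k σsq P W := by
  simp only [modSINR, re_trace_mul_smul_mul_conjTranspose_smul, frobNormSq_smul]
  rw [mul_left_comm, ← mul_add, mul_div_mul_left _ _ (by positivity)]

end SINR

theorem modSINR_eq_trueSINR_and_opt_transfer_general {L K : ℕ}
    (h : Fin K → Fin L → ℂ) (σsq : Fin K → ℝ)
    (P : ℝ) (hP : 0 < P)
    (β : Fin K → ℝ) :
    (∀ W : Matrix (Fin L) (Fin K) ℂ, frobNormSq W = P →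
      ∀ k, modSINR h k σsq P W = trueSINR h k σsq W) ∧
    (∀ W₀ : Matrix (Fin L) (Fin K) ℂ, W₀ ≠ 0 →
      (∀ W : Matrix (Fin L) (Fin K) ℂ,
        ∑ k, β k * Real.logb 2 (1 + modSINR h k σsq P W) ≤
        ∑ k, β k * Real.logb 2 (1 + modSINR h k σsq P W₀)) →
      (frobNormSq (((Real.sqrt P / frobNorm W₀ : ℝ) : ℂ) • W₀) = P ∧
       ∀ W : Matrix (Fin L) (Fin K) ℂ, frobNormSq W = P →
        ∑ k, β k * Real.logb 2 (1 + trueSINR h k σsq W) ≤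
        ∑ k, β k * Real.logb 2
          (1 + trueSINR h k σsq (((Real.sqrt P / frobNorm W₀ : ℝ) : ℂ) • W₀)))) := by
  have on_sphere : ∀ W : Matrix (Fin L) (Fin K) ℂ, frobNormSq W = P →
      ∀ k, modSINR h k σsq P W = trueSINR h k σsq W :=
    fun _ hW k => modSINR_eq_trueSINR_of_frobNormSq_eq h k σsq hP.ne' hW
  refine ⟨on_sphere, fun W₀ hW₀ hopt => ?_⟩
  set c : ℝ := Real.sqrt P / frobNorm W₀
  have hsphere : frobNormSq ((c : ℂ) • W₀) = P := frobNormSq_smul_sqrt_div_frobNorm hW₀ hP.le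
  have hc : (c : ℂ) ≠ 0 := Complex.ofReal_ne_zero.mpr
    (div_pos (Real.sqrt_pos.mpr hP) (Real.sqrt_pos.mpr (frobNormSq_pos hW₀))).ne'
  refine ⟨hsphere, fun W hW => ?_⟩
  calc ∑ k, β k * Real.logb 2 (1 + trueSINR h k σsq W)
      = ∑ k, β k * Real.logb 2 (1 + modSINR h k σsq P W) := by
        simp only [on_sphere W hW]
    _ ≤ ∑ k, β k * Real.logb 2 (1 + modSINR h k σsq P W₀) := hopt W
    _ = ∑ k, β k * Real.logb 2 (1 + trueSINR h k σsq ((c : ℂ) • W₀)) := by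
        simp only [← on_sphere _ hsphere, modSINR_smul h _ σsq W₀ hc]

/-- (a) on the power sphere ‖W‖_F² = P the modified SINR coincides with the
true SINR; (b) a maximizer of the unconstrained modified weighted sum rate, once
rescaled to transmit power P, is a maximizer of the power-constrained weighted
sum-rate problem. -/
theorem modSINR_eq_trueSINR_and_opt_transfer {L K : ℕ}
    (h : Fin K → Fin L → ℂ) (σsq : Fin K → ℝ) (hσ : ∀ k, 0 < σsq k)
    (P : ℝ) (hP : 0 < P)
    (β : Fin K → ℝ) (hβ : ∀ k, 0 ≤ β k) (hβsum : ∑ k, β k = 1) :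
    (∀ W : Matrix (Fin L) (Fin K) ℂ, frobNormSq W = P →
      ∀ k, modSINR h k σsq P W = trueSINR h k σsq W) ∧
    (∀ W₀ : Matrix (Fin L) (Fin K) ℂ, W₀ ≠ 0 →
      (∀ W : Matrix (Fin L) (Fin K) ℂ,
        ∑ k, β k * Real.logb 2 (1 + modSINR h k σsq P W) ≤
        ∑ k, β k * Real.logb 2 (1 + modSINR h k σsq P W₀)) →
      (frobNormSq (((Real.sqrt P / frobNorm W₀ : ℝ) : ℂ) • W₀) = P ∧
       ∀ W : Matrix (Fin L) (Fin K) ℂ, frobNormSq W = P →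
        ∑ k, β k * Real.logb 2 (1 + trueSINR h k σsq W) ≤
        ∑ k, β k * Real.logb 2
          (1 + trueSINR h k σsq (((Real.sqrt P / frobNorm W₀ : ℝ) : ℂ) • W₀)))) :=
  modSINR_eq_trueSINR_and_opt_transfer_general h σsq P hP β
end

section
/- Lagrangian dual (concavity in the auxiliary variable): for fixed real numbers S ≥ 0 (signal power), I ≥ 0, σ² > 0 with SINR γ = S/(I + σ²), the function φ(ξ) = log(1+ξ) − ξ + (1+ξ)·S/(S + I + σ²) defined for ξ ≥ 0 is concave in ξ, is uniquely maximized at ξ* = γ = S/(I+σ²), and its maximum value equals log(1+γ). -/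
/-!
Writing `γ = S/(I+σ²)`, the identity `(1+ξ)·S/(S+I+σ²) - ξ = 1 - (1+ξ)/(1+γ)` turns the objective
into `ψ(1+ξ) + 1` with `ψ(y) = log y - y/(1+γ)`. This is a concave function, and since
`log (y/c) ≤ y/c - 1` with equality only at `y = c`, it is uniquely maximised at `y = 1+γ`,
with maximum `log (1+γ) - 1`.
-/

open Real Set

theorem concaveOn_log_sub_div (c : ℝ) : ConcaveOn ℝ (Ioi 0) fun y => log y - y / c :=
  strictConcaveOn_log_Ioi.concaveOn.sub <|
    (LinearMap.id.smulRight c⁻¹).convexOn (convex_Ioi 0) |>.congr fun y _ => by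
      simp [div_eq_mul_inv]

theorem log_sub_div_le {c y : ℝ} (hc : 0 < c) (hy : 0 < y) : log y - y / c ≤ log c - 1 := by
  have h := log_le_sub_one_of_pos (div_pos hy hc)
  rw [log_div hy.ne' hc.ne'] at h
  linarith

theorem log_sub_div_lt {c y : ℝ} (hc : 0 < c) (hy : 0 < y) (hyc : y ≠ c) :
    log y - y / c < log c - 1 := by
  have h := log_lt_sub_one_of_pos (div_pos hy hc) (by rwa [ne_eq, div_eq_one_iff_eq hc.ne'])
  rw [log_div hy.ne' hc.ne'] at h
  linarith

theorem one_add_mul_div_add_sub_eq {S N : ℝ} (hN : N ≠ 0) (hSN : S + N ≠ 0) (ξ : ℝ) :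
    (1 + ξ) * S / (S + N) - ξ = 1 - (1 + ξ) / (1 + S / N) := by
  rw [one_add_div hN, add_comm N]
  field_simp
  ring

/-- scalar Lagrangian dual transform. For `S ≥ 0`, `I ≥ 0`, `σ² > 0` and
`γ = S/(I+σ²)`, the function `φ(ξ) = log(1+ξ) − ξ + (1+ξ)·S/(S+I+σ²)` is concave on
`ξ ≥ 0`, is uniquely maximized at `ξ* = γ`, and its maximum value is `log(1+γ)`. -/
theorem lagrangian_dual_transform (S I σsq : ℝ) (hS : 0 ≤ S) (hI : 0 ≤ I)
    (hσ : 0 < σsq) :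
    ConcaveOn ℝ (Set.Ici (0 : ℝ))
      (fun ξ => Real.log (1 + ξ) - ξ + (1 + ξ) * S / (S + I + σsq)) ∧
    (∀ ξ : ℝ, 0 ≤ ξ →
      Real.log (1 + ξ) - ξ + (1 + ξ) * S / (S + I + σsq) ≤
      Real.log (1 + S / (I + σsq)) - S / (I + σsq) +
        (1 + S / (I + σsq)) * S / (S + I + σsq)) ∧
    (∀ ξ : ℝ, 0 ≤ ξ →
      Real.log (1 + ξ) - ξ + (1 + ξ) * S / (S + I + σsq) =
        Real.log (1 + S / (I + σsq)) - S / (I + σsq) +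
          (1 + S / (I + σsq)) * S / (S + I + σsq) →
      ξ = S / (I + σsq)) ∧
    Real.log (1 + S / (I + σsq)) - S / (I + σsq) +
        (1 + S / (I + σsq)) * S / (S + I + σsq) =
      Real.log (1 + S / (I + σsq)) := by
  have hN : 0 < I + σsq := by linarith
  set γ := S / (I + σsq)
  have hc : 0 < 1 + γ := by positivity
  have hφ (ξ : ℝ) :
      log (1 + ξ) - ξ + (1 + ξ) * S / (S + I + σsq) = log (1 + ξ) - (1 + ξ) / (1 + γ) + 1 := by
    have := one_add_mul_div_add_sub_eq (S := S) hN.ne' (by linarith) ξ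
    rw [← add_assoc] at this
    linarith
  simp only [hφ, div_self hc.ne']
  refine ⟨?_, fun ξ hξ => ?_, fun ξ hξ heq => ?_, by ring⟩
  · exact (((concaveOn_log_sub_div (1 + γ)).translate_right 1).add_const 1).subset
      (fun ξ (hξ : 0 ≤ ξ) => show (0 : ℝ) < 1 + ξ by linarith) (convex_Ici 0)
  · linarith [log_sub_div_le hc (by linarith : (0 : ℝ) < 1 + ξ)]
  · by_contra hne
    linarith [log_sub_div_lt hc (by linarith : (0 : ℝ) < 1 + ξ) (by contrapose! hne; linarith)]
end
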